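/- Let Σ be a signature with countably many connectives, M = ⟨V, D, ·_M⟩ a Σ-PNmatrix with V countable, and Ax ⊆ L_Σ(P). Then the strengthening ⊢_M^Ax of ⊢_M with axioms Ax is characterized by a Σ-PNmatrix with a countable set of truth-values (namely M♭_Ax, whose set of truth-values is a subset of V × L_Σ(P)). In particular, every axiomatic extension of the logic of a countable PNmatrix can be characterized by a countable PNmatrix. -/

import Mathlib

/-! A valuation `w` of `M♭_Ax` carries in its second component the evaluated formula up to a
substitution of its variables, since the truth tables force `(w B).2 = B[p ↦ (w p).2]`. Axiom
instances are closed under substitution, so `(w B).2` is an axiom instance whenever `B` is, and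
then `(w B).1` is designated: the first components form an `M`-valuation satisfying `Ax^inst`.
Conversely, such an `M`-valuation `v` gives the `M♭_Ax`-valuation `B ↦ (v B, B)`. Countability
holds because formulas over countably many connectives embed into a W-type with encodable data. -/

set_option autoImplicit false

namespace PNPaper

/-- Formulas over a propositional signature given by a type `C` of connectives
with arity function `ar`, generated over a set (type) `P` of sentential variables. -/
inductive Fm (C : Type) (ar : C → ℕ) (P : Type) : Type where
  | var : P → Fm C ar P
  | app : (c : C) → (Fin (ar c) → Fm C ar P) → Fm C ar P

variable {C : Type} {ar : C → ℕ} {P Q : Type} {V W : Type}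

/-- Substitution, extended to the unique endomorphism of the formula algebra. -/
def Fm.subst (σ : Q → Fm C ar P) : Fm C ar Q → Fm C ar P
  | .var q => σ q
  | .app c As => .app c (fun i => (As i).subst σ)

/-- The set of substitution instances of formulas in `Ax`. -/
def instSet (Ax : Set (Fm C ar P)) : Set (Fm C ar P) :=
  {B | ∃ A ∈ Ax, ∃ σ : P → Fm C ar P, B = A.subst σ}

/-- A formula uses only connectives from `S`. -/
def Fm.usesOnly (S : Set C) : Fm C ar P → Prop
  | .var _ => True
  | .app c As => c ∈ S ∧ ∀ i, (As i).usesOnly S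

/-- All variables of the formula belong to `Vs`. -/
def Fm.varsIn (Vs : Set P) : Fm C ar P → Prop
  | .var p => p ∈ Vs
  | .app _ As => ∀ i, (As i).varsIn Vs

/-- A Σ-PNmatrix: a set of truth-values (carrier), designated values,
and a (possibly partial, non-deterministic) truth-table for each connective. -/
structure Mat (C : Type) (ar : C → ℕ) (V : Type) where
  carrier : Set V
  desig : Set V
  int : (c : C) → (Fin (ar c) → V) → Set V

/-- Well-formedness: `D ⊆ V` and truth-tables take values in `V`. -/
def Mat.WF (M : Mat C ar V) : Prop :=
  M.desig ⊆ M.carrier ∧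
  ∀ (c : C) (xs : Fin (ar c) → V), (∀ i, xs i ∈ M.carrier) → M.int c xs ⊆ M.carrier

/-- An `M`-valuation. -/
def Mat.IsVal (M : Mat C ar V) (v : Fm C ar P → V) : Prop :=
  (∀ A, v A ∈ M.carrier) ∧
  ∀ (c : C) (As : Fin (ar c) → Fm C ar P), v (.app c As) ∈ M.int c (fun i => v (As i))

/-- The (single conclusion) consequence relation `⊢_M`. -/
def Mat.Conseq (M : Mat C ar V) (Γ : Set (Fm C ar P)) (A : Fm C ar P) : Prop :=
  ∀ v : Fm C ar P → V, M.IsVal v → (∀ B ∈ Γ, v B ∈ M.desig) → v A ∈ M.desig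

/-- The strengthening `⊢_M^Ax` of `⊢_M` with (schema) axioms `Ax`. -/
def Mat.ConseqAx (M : Mat C ar V) (Ax Γ : Set (Fm C ar P)) (A : Fm C ar P) : Prop :=
  M.Conseq (Γ ∪ instSet Ax) A

/-- The multiple-conclusion consequence relation `▷_M`. -/
def Mat.MConseq (M : Mat C ar V) (Γ Δ : Set (Fm C ar P)) : Prop :=
  ∀ v : Fm C ar P → V, M.IsVal v → (∀ B ∈ Γ, v B ∈ M.desig) → ∃ B ∈ Δ, v B ∈ M.desig

/-- The set `A_M(x₁,…,xₙ)` of possible values of `A` when `pᵢ ↦ xᵢ`. -/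
def Mat.fmSet (M : Mat C ar V) (n : ℕ) (A : Fm C ar ℕ) (xs : Fin n → V) : Set V :=
  {y | ∃ v : Fm C ar ℕ → V, M.IsVal v ∧ (∀ i : Fin n, v (Fm.var i.1) = xs i) ∧ v A = y}

/-- `M` is `S`-deterministic. -/
def Mat.DetOn (M : Mat C ar V) (S : Set C) : Prop :=
  ∀ c ∈ S, ∀ xs : Fin (ar c) → V, (∀ i, xs i ∈ M.carrier) → (M.int c xs).Subsingleton

/-- `M` is total. -/
def Mat.Total (M : Mat C ar V) : Prop :=
  ∀ (c : C) (xs : Fin (ar c) → V), (∀ i, xs i ∈ M.carrier) → (M.int c xs).Nonempty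

/-- `M'` is a refinement of `M`. -/
def IsRefinement (M' M : Mat C ar V) : Prop :=
  M'.carrier ⊆ M.carrier ∧
  M'.desig = M.desig ∩ M'.carrier ∧
  ∀ (c : C) (xs : Fin (ar c) → V), (∀ i, xs i ∈ M'.carrier) → M'.int c xs ⊆ M.int c xs

/-- `E` is an expansion function for `M` with contraction `ct`:
the sets `E x` (for truth-values `x` of `M`) are non-empty and `ct` picks, for each
element of `E x`, the unique `x` it expands (this forces pairwise disjointness). -/
def IsExpansion (M : Mat C ar V) (E : V → Set W) (ct : W → V) : Prop :=
  (∀ x ∈ M.carrier, (E x).Nonempty) ∧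
  (∀ x ∈ M.carrier, ∀ y ∈ E x, ct y = x)

/-- The `E`-expansion of `M`. -/
def expMat (M : Mat C ar V) (E : V → Set W) (ct : W → V) : Mat C ar W where
  carrier := ⋃ x ∈ M.carrier, E x
  desig := ⋃ x ∈ M.desig, E x
  int := fun c ys => ⋃ x ∈ M.int c (fun i => ct (ys i)), E x

/-- A rexpansion of `M` is a refinement of some `E`-expansion of `M`. -/
def IsRexpansion (M' : Mat C ar W) (M : Mat C ar V) : Prop :=
  ∃ (E : V → Set W) (ct : W → V), IsExpansion M E ct ∧ IsRefinement M' (expMat M E ct)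

/-- The truth-values of `M♭_Ax`: pairs `(x, A)` such that `x ∈ D` whenever `A ∈ Ax^inst`. -/
def flatCarrier {C : Type} {ar : C → ℕ} {V : Type} (M : Mat C ar V)
    (Ax : Set (Fm C ar ℕ)) : Set (V × Fm C ar ℕ) :=
  {xa | xa.1 ∈ M.carrier ∧ (xa.2 ∈ instSet Ax → xa.1 ∈ M.desig)}

/-- The PNmatrix `M♭_Ax` of Theorem `flat`. -/
def flatMat {C : Type} {ar : C → ℕ} {V : Type} (M : Mat C ar V)
    (Ax : Set (Fm C ar ℕ)) : Mat C ar (V × Fm C ar ℕ) where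
  carrier := flatCarrier M Ax
  desig := {xa | xa.1 ∈ M.desig} ∩ flatCarrier M Ax
  int := fun c ys =>
    {xa | xa ∈ flatCarrier M Ax ∧ xa.1 ∈ M.int c (fun i => (ys i).1) ∧
          xa.2 = Fm.app c (fun i => (ys i).2)}


def Fm.Arity (ar : C → ℕ) (P : Type) : P ⊕ C → Type
  | .inl _ => Fin 0
  | .inr c => Fin (ar c)

instance Fm.Arity.fintype (a : P ⊕ C) : Fintype (Fm.Arity ar P a) := by
  cases a <;> unfold Fm.Arity <;> infer_instance

instance Fm.Arity.encodable (a : P ⊕ C) : Encodable (Fm.Arity ar P a) := by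
  cases a <;> unfold Fm.Arity <;> infer_instance

def Fm.toWType : Fm C ar P → WType (Fm.Arity ar P)
  | .var p => ⟨.inl p, Fin.elim0⟩
  | .app c As => ⟨.inr c, fun i => (As i).toWType⟩

def Fm.ofWType : WType (Fm.Arity ar P) → Fm C ar P
  | ⟨.inl p, _⟩ => .var p
  | ⟨.inr c, f⟩ => .app c (fun i => Fm.ofWType (f i))

theorem Fm.ofWType_toWType : ∀ A : Fm C ar P, Fm.ofWType A.toWType = A
  | .var _ => rfl
  | .app c As => by
    simp only [Fm.toWType, Fm.ofWType, Fm.ofWType_toWType]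

instance Fm.countable [Countable C] [Countable P] : Countable (Fm C ar P) :=
  have : Encodable (P ⊕ C) := Encodable.ofCountable _
  (Function.LeftInverse.injective Fm.ofWType_toWType).countable

theorem Fm.subst_subst (σ : Q → Fm C ar P) (τ : P → Fm C ar P) :
    ∀ A : Fm C ar Q, (A.subst σ).subst τ = A.subst (fun q => (σ q).subst τ)
  | .var _ => rfl
  | .app c As => by simp only [Fm.subst, Fm.subst_subst]

theorem instSet_subst {Ax : Set (Fm C ar P)} {B : Fm C ar P} (hB : B ∈ instSet Ax)
    (τ : P → Fm C ar P) : B.subst τ ∈ instSet Ax := by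
  obtain ⟨A, hA, σ, rfl⟩ := hB
  exact ⟨A, hA, _, Fm.subst_subst σ τ A⟩

section Flat

variable {M : Mat C ar V} {Ax : Set (Fm C ar ℕ)} {w : Fm C ar ℕ → V × Fm C ar ℕ}

theorem Mat.IsVal.flatMat_snd (hw : (flatMat M Ax).IsVal w) :
    ∀ B : Fm C ar ℕ, (w B).2 = B.subst (fun p => (w (.var p)).2)
  | .var _ => rfl
  | .app c As => by
    rw [(hw.2 c As).2.2, Fm.subst]
    exact congrArg _ (funext fun i => hw.flatMat_snd (As i))

theorem Mat.IsVal.flatMat_fst (hw : (flatMat M Ax).IsVal w) : M.IsVal (fun B => (w B).1) :=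
  ⟨fun B => (hw.1 B).1, fun c As => (hw.2 c As).2.1⟩

theorem Mat.IsVal.flatMat_fst_mem_desig (hw : (flatMat M Ax).IsVal w) {B : Fm C ar ℕ}
    (hB : B ∈ instSet Ax) : (w B).1 ∈ M.desig :=
  (hw.1 B).2 (hw.flatMat_snd B ▸ instSet_subst hB _)

theorem Mat.IsVal.flatMat_pair {v : Fm C ar ℕ → V} (hv : M.IsVal v)
    (hAx : ∀ B ∈ instSet Ax, v B ∈ M.desig) : (flatMat M Ax).IsVal (fun B => (v B, B)) :=
  ⟨fun B => ⟨hv.1 B, hAx B⟩, fun c As => ⟨⟨hv.1 _, hAx _⟩, hv.2 c As, rfl⟩⟩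

theorem flatMat_carrier_countable [Countable C] (hV : M.carrier.Countable) :
    (flatMat M Ax).carrier.Countable :=
  (hV.prod Set.countable_univ).mono fun _ hx => Set.mem_prod.2 ⟨hx.1, Set.mem_univ _⟩

theorem conseqAx_iff_flatMat_conseq {Γ : Set (Fm C ar ℕ)} {A : Fm C ar ℕ} :
    M.ConseqAx Ax Γ A ↔ (flatMat M Ax).Conseq Γ A := by
  constructor
  · intro h w hw hΓ
    refine ⟨h _ hw.flatMat_fst ?_, hw.1 A⟩
    rintro B (hB | hB)
    · exact (hΓ B hB).1
    · exact hw.flatMat_fst_mem_desig hB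
  · intro h v hv hprem
    have hAx : ∀ B ∈ instSet Ax, v B ∈ M.desig := fun B hB => hprem B (.inr hB)
    exact (h _ (hv.flatMat_pair hAx) fun B hB => ⟨hprem B (.inl hB), hv.1 B, hAx B⟩).1

end Flat

theorem stmt6_general {C : Type} {ar : C → ℕ} {V : Type} [Countable C]
    (M : Mat C ar V) (hV : M.carrier.Countable)
    (Ax : Set (Fm C ar ℕ)) :
    (flatMat M Ax).carrier.Countable ∧
    ∀ (Γ : Set (Fm C ar ℕ)) (A : Fm C ar ℕ),
      M.ConseqAx Ax Γ A ↔ (flatMat M Ax).Conseq Γ A :=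
  ⟨flatMat_carrier_countable hV, fun _ _ => conseqAx_iff_flatMat_conseq⟩

/-- over a signature with countably many connectives, every axiomatic
extension of the logic of a countable PNmatrix is characterized by a countable
PNmatrix, namely `M♭_Ax`, whose truth-values live in `V × L_Σ(P)`. -/
theorem stmt6 {C : Type} {ar : C → ℕ} {V : Type} [Countable C]
    (M : Mat C ar V) (hWF : M.WF) (hV : M.carrier.Countable)
    (Ax : Set (Fm C ar ℕ)) :
    (flatMat M Ax).carrier.Countable ∧
    ∀ (Γ : Set (Fm C ar ℕ)) (A : Fm C ar ℕ),
      M.ConseqAx Ax Γ A ↔ (flatMat M Ax).Conseq Γ A :=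
  stmt6_general M hV Ax

end PNPaper
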